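/- Let X ⊆ ℝ^n, let E and F be equivalence classes of ∼_X, and let v be a nonzero vector in Str_X(E), where Str_X(E) denotes the common value of Str_X(x) for x ∈ E. Suppose some y ∈ F lies in the topological closure of L_v(y) ∩ E. Then Str_X(F) ⊆ Str_X(E); moreover, if E ≠ F then v ∉ Str_X(F), and therefore dim Str_X(F) < dim Str_X(E). -/

import Mathlib

open FirstOrder

/-- The language of `⟨ℝ,+,<,1⟩`: one constant, one binary function, one binary relation. -/
def SsLang : Language where
  Functions := fun m => match m with
    | 0 => Unit
    | 2 => Unit
    | _ => Empty
  Relations := fun m => match m with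
    | 2 => Unit
    | _ => Empty

noncomputable instance ssStructure : SsLang.Structure ℝ where
  funMap := fun {m} f x =>
    match m, f with
    | 0, _ => (1 : ℝ)
    | 2, _ => x 0 + x 1
  RelMap := fun {m} r x =>
    match m, r with
    | 2, _ => x 0 < x 1

/-- The language of `⟨ℝ,+,<,ℤ⟩`: one binary function, one unary relation, one binary relation. -/
def LsLang : Language where
  Functions := fun m => match m with
    | 2 => Unit
    | _ => Empty
  Relations := fun m => match m with
    | 1 => Unit
    | 2 => Unit
    | _ => Empty

noncomputable instance lsStructure : LsLang.Structure ℝ where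
  funMap := fun {m} f x =>
    match m, f with
    | 2, _ => x 0 + x 1
  RelMap := fun {m} r x =>
    match m, r with
    | 1, _ => ∃ k : ℤ, x 0 = (k : ℝ)
    | 2, _ => x 0 < x 1

/-- `X ⊆ ℝ^n` is definable without parameters in `⟨ℝ,+,<,1⟩`. -/
def SsDefinable {n : ℕ} (X : Set (Fin n → ℝ)) : Prop :=
  Set.Definable (∅ : Set ℝ) SsLang X

/-- `X ⊆ ℝ^n` is definable without parameters in `⟨ℝ,+,<,ℤ⟩`. -/
def LsDefinable {n : ℕ} (X : Set (Fin n → ℝ)) : Prop :=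
  Set.Definable (∅ : Set ℝ) LsLang X

def SsDefinable1 (A : Set ℝ) : Prop := SsDefinable {f : Fin 1 → ℝ | f 0 ∈ A}
def LsDefinable1 (A : Set ℝ) : Prop := LsDefinable {f : Fin 1 → ℝ | f 0 ∈ A}

/-- `v` is an `X`-stratum at `x`: for some `r > 0`,
`B(x,r) ∩ L_v(X ∩ B(x,r)) ⊆ X`.  (The sup norm/metric is the default one on `ι → ℝ`.) -/
def IsStratum {ι : Type} [Fintype ι] (X : Set (ι → ℝ)) (x v : ι → ℝ) : Prop :=
  ∃ r > (0 : ℝ), ∀ y ∈ Metric.ball x r,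
    (∃ z ∈ X ∩ Metric.ball x r, ∃ α : ℝ, y = z + α • v) → y ∈ X

/-- `x` is `X`-singular: `Str_X(x) = {0}`. -/
def IsSingular {ι : Type} [Fintype ι] (X : Set (ι → ℝ)) (x : ι → ℝ) : Prop :=
  ∀ v, IsStratum X x v → v = 0

/-- `x ∼_X y`: some translation of a small ball around `x` identifies `X` near `x` and near `y`. -/
def SimX {n : ℕ} (X : Set (Fin n → ℝ)) (x y : Fin n → ℝ) : Prop :=
  ∃ r > (0 : ℝ), ∀ w : Fin n → ℝ, ‖w‖ < r → (x + w ∈ X ↔ y + w ∈ X)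

/-- the dimension of the subspace `Str_X(x)` of strata at `x`. -/
noncomputable def strDim {n : ℕ} (X : Set (Fin n → ℝ)) (x : Fin n → ℝ) : ℕ :=
  Module.finrank ℝ (Submodule.span ℝ {v | IsStratum X x v})

/-- An interval of `ℝ` all of whose finite endpoints are rational: an order-convex set
whose frontier points (i.e. finite endpoints) are all rational. -/
def IsRatInterval (I : Set ℝ) : Prop :=
  I.OrdConnected ∧ ∀ x ∈ frontier I, ∃ q : ℚ, x = (q : ℝ)

/-!
Near a point `x` where `v` is a stratum, `X` is a union of segments parallel to `v`; this local
picture persists at nearby points and is carried along `∼_X`. Hence a stratum of `F`, being a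
stratum on a whole ball around `y`, is a stratum at the points of `E` accumulating at `y`.
If `v` were also a stratum of `F`, then `X` would look the same near `y` and near nearby points
of `L_v(y)`, so those points of `E` would lie in `F`. Finally `v ∈ Str(E) \ Str(F)` makes the
inclusion of subspaces strict.
-/

open Metric Filter Topology

/-- The stratum condition `B(x,r) ∩ L_v(X ∩ B(x,r)) ⊆ X` with the ball replaced by any set `U`. -/
def IsStratumOn {E : Type*} [AddCommGroup E] [Module ℝ E] (X U : Set E) (v : E) : Prop :=
  ∀ z ∈ X ∩ U, ∀ α : ℝ, z + α • v ∈ U → z + α • v ∈ X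

section Module

variable {E : Type*} [AddCommGroup E] [Module ℝ E] {X U V : Set E} {v : E}

theorem isStratumOn_zero : IsStratumOn X U 0 := by
  intro z hz α _
  simpa using hz.1

theorem IsStratumOn.smul (h : IsStratumOn X U v) (c : ℝ) : IsStratumOn X U (c • v) := by
  intro z hz α hzα
  rw [smul_smul] at hzα ⊢
  exact h z hz _ hzα

theorem IsStratumOn.mono (h : IsStratumOn X U v) (hVU : V ⊆ U) : IsStratumOn X V v :=
  fun z hz α hzα => h z ⟨hz.1, hVU hz.2⟩ α (hVU hzα)

theorem IsStratumOn.mem_iff (h : IsStratumOn X U v) {p : E} (hp : p ∈ U) {α : ℝ}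
    (hpα : p + α • v ∈ U) : p ∈ X ↔ p + α • v ∈ X := by
  refine ⟨fun hpX => h p ⟨hpX, hp⟩ α hpα, fun hpαX => ?_⟩
  simpa using h _ ⟨hpαX, hpα⟩ (-α) (by simpa using hp)

end Module

section Normed

variable {E : Type*} [NormedAddCommGroup E] [NormedSpace ℝ E] {X : Set E} {x z v w : E} {r : ℝ}

/-- Walk from `z` to `z + α • (v + w)` in `M` steps, each a short move along `v` followed by one
along `w`: the intermediate points stay in `ball x r`. -/
theorem IsStratumOn.add_ball (hv : IsStratumOn X (ball x r) v) (hw : IsStratumOn X (ball x r) w) :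
    IsStratumOn X (ball x (r / 2)) (v + w) := by
  rintro z ⟨hzX, hz⟩ α hzα
  have hr : 0 < r / 2 := pos_of_mem_ball hz
  obtain ⟨M, hM⟩ := exists_nat_gt (‖α • v‖ / (r / 2))
  have hM0 : (0 : ℝ) < M := (div_nonneg (norm_nonneg _) hr.le).trans_lt hM
  set q : ℕ → E := fun k => z + ((k : ℝ) / M) • (α • (v + w)) with hq
  have hq_ball : ∀ k ≤ M, q k ∈ ball x (r / 2) := fun k hk =>
    (convex_ball x (r / 2)).add_smul_mem hz (by simpa using hzα)
      ⟨by positivity, (div_le_one hM0).2 (by exact_mod_cast hk)⟩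
  have hstep_v : ‖(α / M) • v‖ < r / 2 := by
    rwa [div_eq_inv_mul, mul_smul, norm_smul_of_nonneg (by positivity), inv_mul_lt_iff₀ hM0,
      ← div_lt_iff₀ hr]
  have hq_succ : ∀ k : ℕ, q (k + 1) = q k + (α / M) • v + (α / M) • w := fun k => by
    simp only [hq, smul_add, smul_smul]
    push_cast
    match_scalars <;> ring
  have hq_mem : ∀ k ≤ M, q k ∈ X := by
    intro k
    induction k with
    | zero => intro _; simpa [hq] using hzX
    | succ k ih =>
      intro hk
      have hqk := hq_ball k (Nat.le_of_succ_le hk)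
      have hqv_ball : q k + (α / M) • v ∈ ball x r := by
        rw [mem_ball, dist_eq_norm, add_sub_right_comm]
        linarith [norm_add_le (q k - x) ((α / M) • v), mem_ball_iff_norm.1 hqk]
      have hqv : q k + (α / M) • v ∈ X :=
        hv _ ⟨ih (Nat.le_of_succ_le hk), ball_subset_ball (by linarith) hqk⟩ _ hqv_ball
      rw [hq_succ]
      exact hw _ ⟨hqv, hqv_ball⟩ _ (hq_succ k ▸ ball_subset_ball (by linarith) (hq_ball _ hk))
  simpa [hq, div_self hM0.ne'] using hq_mem M le_rfl

theorem IsStratumOn.translate {ρ : ℝ} (H : ∀ u : E, ‖u‖ < ρ → (x + u ∈ X ↔ z + u ∈ X))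
    (h : IsStratumOn X (ball x ρ) v) : IsStratumOn X (ball z ρ) v := by
  rintro p ⟨hpX, hp⟩ α hpα
  rw [mem_ball_iff_norm] at hp hpα
  have hx : x + (p - z) ∈ X := (H _ hp).2 (by simpa using hpX)
  have hxα : x + (p - z) + α • v ∈ X :=
    h _ ⟨hx, by simpa [mem_ball_iff_norm] using hp⟩ α
      (by rw [mem_ball_iff_norm]; convert hpα using 2; abel)
  simpa using (H (p + α • v - z) hpα).1 (by convert hxα using 1; abel)

end Normed

section Strata

variable {ι : Type} [Fintype ι] {X : Set (ι → ℝ)} {x v w : ι → ℝ}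

theorem isStratum_iff : IsStratum X x v ↔ ∃ r > 0, IsStratumOn X (ball x r) v := by
  refine exists_congr fun r => and_congr_right fun _ => ⟨?_, ?_⟩
  · intro H z hz α hzα
    exact H _ hzα ⟨z, hz, α, rfl⟩
  · rintro H p hp ⟨z, hz, α, rfl⟩
    exact H z hz α hp

theorem IsStratumOn.isStratum {U : Set (ι → ℝ)} (h : IsStratumOn X U v) (hU : IsOpen U)
    (hx : x ∈ U) : IsStratum X x v := by
  obtain ⟨r, hr, hrU⟩ := isOpen_iff.1 hU x hx
  exact isStratum_iff.2 ⟨r, hr, h.mono hrU⟩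

theorem IsStratum.eventually (h : IsStratum X x v) : ∀ᶠ y in 𝓝 x, IsStratum X y v := by
  obtain ⟨r, hr, hxr⟩ := isStratum_iff.1 h
  filter_upwards [ball_mem_nhds x hr] with y hy
  exact hxr.isStratum isOpen_ball hy

theorem isStratum_zero : IsStratum X x 0 :=
  isStratum_iff.2 ⟨1, one_pos, isStratumOn_zero⟩

theorem IsStratum.smul (h : IsStratum X x v) (c : ℝ) : IsStratum X x (c • v) := by
  obtain ⟨r, hr, hxr⟩ := isStratum_iff.1 h
  exact isStratum_iff.2 ⟨r, hr, hxr.smul c⟩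

theorem IsStratum.add (hv : IsStratum X x v) (hw : IsStratum X x w) : IsStratum X x (v + w) := by
  obtain ⟨r, hr, hxr⟩ := isStratum_iff.1 hv
  obtain ⟨s, hs, hxs⟩ := isStratum_iff.1 hw
  exact isStratum_iff.2 ⟨min r s / 2, by positivity,
    (hxr.mono (ball_subset_ball (min_le_left r s))).add_ball
      (hxs.mono (ball_subset_ball (min_le_right r s)))⟩

/-- `Str_X(x)`. -/
def strata (X : Set (ι → ℝ)) (x : ι → ℝ) : Submodule ℝ (ι → ℝ) where
  carrier := {v | IsStratum X x v}
  zero_mem' := isStratum_zero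
  add_mem' := IsStratum.add
  smul_mem' c _ h := h.smul c

end Strata

section Classes

variable {n : ℕ} {X : Set (Fin n → ℝ)} {x y z v : Fin n → ℝ}

theorem strDim_eq_finrank_strata : strDim X x = Module.finrank ℝ (strata X x) :=
  congrArg (fun S : Submodule ℝ (Fin n → ℝ) => Module.finrank ℝ S) (strata X x).span_eq

theorem SimX.symm (h : SimX X x y) : SimX X y x := by
  obtain ⟨r, hr, H⟩ := h
  exact ⟨r, hr, fun w hw => (H w hw).symm⟩

theorem SimX.trans (hxy : SimX X x y) (hyz : SimX X y z) : SimX X x z := by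
  obtain ⟨r, hr, H⟩ := hxy
  obtain ⟨s, hs, H'⟩ := hyz
  exact ⟨min r s, lt_min hr hs, fun w hw =>
    (H w (hw.trans_le (min_le_left r s))).trans (H' w (hw.trans_le (min_le_right r s)))⟩

theorem SimX.setOf_eq (h : SimX X x y) : {z | SimX X x z} = {z | SimX X y z} :=
  Set.ext fun _ => ⟨h.symm.trans, h.trans⟩

theorem SimX.isStratum (h : SimX X x y) (hv : IsStratum X x v) : IsStratum X y v := by
  obtain ⟨ρ, hρ, H⟩ := h
  obtain ⟨r, hr, hxr⟩ := isStratum_iff.1 hv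
  refine isStratum_iff.2 ⟨min ρ r, lt_min hρ hr, ?_⟩
  exact (hxr.mono (ball_subset_ball (min_le_right ρ r))).translate
    fun u hu => H u (hu.trans_le (min_le_left ρ r))

theorem IsStratum.eventually_simX_of_mem_line (h : IsStratum X y v) :
    ∀ᶠ z in 𝓝 y, (∃ α : ℝ, z = y + α • v) → SimX X y z := by
  obtain ⟨r, hr, hyr⟩ := isStratum_iff.1 h
  filter_upwards [ball_mem_nhds y hr] with z hz
  rintro ⟨α, rfl⟩
  refine ⟨r - dist (y + α • v) y, sub_pos.2 hz, fun u hu => ?_⟩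
  have hyu : y + u ∈ ball y r := by
    simpa [mem_ball_iff_norm] using hu.trans_le (sub_le_self _ dist_nonneg)
  have hzu : y + α • v + u ∈ ball y r :=
    ball_subset_ball' (le_of_eq (sub_add_cancel r (dist (y + α • v) y)))
      (by rwa [mem_ball, dist_self_add_left])
  rw [add_right_comm] at hzu ⊢
  exact hyr.mem_iff hyu hzu

end Classes

theorem stmt13_general (n : ℕ) (X : Set (Fin n → ℝ)) (xE xF v : Fin n → ℝ)
    (hvE : IsStratum X xE v)
    (y : Fin n → ℝ) (hyF : SimX X xF y)
    (hadh : y ∈ closure ({z | ∃ α : ℝ, z = y + α • v} ∩ {z | SimX X xE z})) :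
    (∀ w : Fin n → ℝ, IsStratum X xF w → IsStratum X xE w) ∧
    ({z | SimX X xE z} ≠ {z | SimX X xF z} →
      ¬ IsStratum X xF v ∧ strDim X xF < strDim X xE) := by
  rw [mem_closure_iff_frequently] at hadh
  have hFE : ∀ w, IsStratum X xF w → IsStratum X xE w := fun w hw => by
    obtain ⟨z, ⟨-, hzE⟩, hzw⟩ := (hadh.and_eventually (hyF.isStratum hw).eventually).exists
    exact hzE.symm.isStratum hzw
  have hvF : {z | SimX X xE z} ≠ {z | SimX X xF z} → ¬ IsStratum X xF v := fun hEF hvF => by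
    obtain ⟨z, ⟨hzL, hzE⟩, hyz⟩ :=
      (hadh.and_eventually (hyF.isStratum hvF).eventually_simX_of_mem_line).exists
    exact hEF (hzE.trans ((hyz hzL).symm.trans hyF.symm)).setOf_eq
  refine ⟨hFE, fun hEF => ⟨hvF hEF, ?_⟩⟩
  rw [strDim_eq_finrank_strata, strDim_eq_finrank_strata]
  exact Submodule.finrank_lt_finrank_of_lt
    (SetLike.lt_iff_le_and_exists.2 ⟨hFE, v, hvE, hvF hEF⟩)

/-- If a point `y` of the class `F` of `xF` is adherent to `L_v(y) ∩ E` (where `E` is the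
class of `xE` and `v` a nonzero stratum of `E`), then `Str(F) ⊆ Str(E)`; and if `E ≠ F`
then moreover `v ∉ Str(F)` and `dim Str(F) < dim Str(E)`. -/
theorem stmt13 (n : ℕ) (X : Set (Fin n → ℝ)) (xE xF v : Fin n → ℝ)
    (hv : v ≠ 0) (hvE : IsStratum X xE v)
    (y : Fin n → ℝ) (hyF : SimX X xF y)
    (hadh : y ∈ closure ({z | ∃ α : ℝ, z = y + α • v} ∩ {z | SimX X xE z})) :
    (∀ w : Fin n → ℝ, IsStratum X xF w → IsStratum X xE w) ∧
    ({z | SimX X xE z} ≠ {z | SimX X xF z} →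
      ¬ IsStratum X xF v ∧ strDim X xF < strDim X xE) :=
  stmt13_general n X xE xF v hvE y hyF hadh
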